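/- For every i = 1,…,m, the function h_i satisfies h_i(0) − inf_{z ∈ ℝ^{d̄}} h_i(z) ≤ 10π·d̄, and the gradient ∇h_i is 75π-Lipschitz continuous on ℝ^{d̄}, i.e., ‖∇h_i(z) − ∇h_i(z′)‖ ≤ 75π·‖z − z′‖ for all z, z′ ∈ ℝ^{d̄}. -/

import Mathlib

open Real Matrix Finset
open scoped Kronecker

noncomputable section

def Psi (u : ℝ) : ℝ := if u ≤ 0 then 0 else 1 - Real.exp (-u ^ 2)
def Phi (v : ℝ) : ℝ := 4 * Real.arctan v + 2 * π
def zc {d : ℕ} (z : EuclideanSpace ℝ (Fin d)) (j : ℕ) : ℝ :=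
  if h : 1 ≤ j ∧ j - 1 < d then z ⟨j - 1, h.2⟩ else 0
def phi {d : ℕ} (z : EuclideanSpace ℝ (Fin d)) (j : ℕ) : ℝ :=
  if j = 1 then -(Psi 1 * Phi (zc z 1))
  else Psi (-zc z (j - 1)) * Phi (-zc z j) - Psi (zc z (j - 1)) * Phi (zc z j)
def hfun (m i : ℕ) {d : ℕ} (z : EuclideanSpace ℝ (Fin d)) : ℝ :=
  if i ≤ m / 3 then phi z 1 + 3 * ∑ j ∈ Finset.Icc 1 (d / 2), phi z (2 * j)
  else if i ≤ 2 * m / 3 then phi z 1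
  else phi z 1 + 3 * ∑ j ∈ Finset.Icc 1 (d / 2), phi z (2 * j + 1)
def ff (m : ℕ) (Lf ε : ℝ) (i : ℕ) {d : ℕ} (z : EuclideanSpace ℝ (Fin d)) : ℝ :=
  300 * π * ε ^ 2 / (m * Lf) * hfun m i ((Real.sqrt m * Lf / (150 * π * ε)) • z)
def blkN {m d : ℕ} (x : EuclideanSpace ℝ (Fin m × Fin d)) (i : ℕ) :
    EuclideanSpace ℝ (Fin d) :=
  WithLp.toLp 2 (fun j => if h : 1 ≤ i ∧ i - 1 < m then x (⟨i - 1, h.2⟩, j) else 0)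
def f0 (m : ℕ) (Lf ε : ℝ) {d : ℕ} (x : EuclideanSpace ℝ (Fin m × Fin d)) : ℝ :=
  ∑ i ∈ Finset.Icc 1 m, ff m Lf ε i (blkN x i)
def l1norm {ι : Type*} [Fintype ι] (x : ι → ℝ) : ℝ := ∑ i, |x i|
def Jmat (p : ℕ) : Matrix (Fin (p - 1)) (Fin p) ℝ :=
  Matrix.of fun i j => if j.val = i.val then -1 else if j.val = i.val + 1 then 1 else 0
def Hmat (m d : ℕ) (Lf : ℝ) : Matrix (Fin (m - 1) × Fin d) (Fin m × Fin d) ℝ :=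
  ((m : ℝ) * Lf) • (Jmat m ⊗ₖ (1 : Matrix (Fin d) (Fin d) ℝ))
def Mset (m₁ m₂ : ℕ) : Finset ℕ := (Finset.Icc 1 (3 * m₂ - 1)).image (· * m₁)
def JM (m₁ m₂ : ℕ) : Matrix (Fin (3 * m₂ - 1)) (Fin (3 * m₁ * m₂)) ℝ :=
  Matrix.of fun i j =>
    if j.val + 1 = (i.val + 1) * m₁ then -1
    else if j.val = (i.val + 1) * m₁ then 1 else 0
def Abar (m₁ m₂ d : ℕ) (Lf : ℝ) :
    Matrix (Fin (3 * m₂ - 1) × Fin d) (Fin (3 * m₁ * m₂) × Fin d) ℝ :=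
  ((3 * m₁ * m₂ : ℕ) * Lf) • (JM m₁ m₂ ⊗ₖ (1 : Matrix (Fin d) (Fin d) ℝ))
abbrev MCidx (m₁ m₂ : ℕ) := {k : Fin (3 * m₁ * m₂ - 1) // k.val + 1 ∉ Mset m₁ m₂}
def JMC (m₁ m₂ : ℕ) : Matrix (MCidx m₁ m₂) (Fin (3 * m₁ * m₂)) ℝ :=
  Matrix.of fun k j => Jmat (3 * m₁ * m₂) k.val j
def Amat (m₁ m₂ d : ℕ) (Lf : ℝ) :
    Matrix (MCidx m₁ m₂ × Fin d) (Fin (3 * m₁ * m₂) × Fin d) ℝ :=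
  ((3 * m₁ * m₂ : ℕ) * Lf) • (JMC m₁ m₂ ⊗ₖ (1 : Matrix (Fin d) (Fin d) ℝ))
def mvec {ι κ : Type*} [Fintype κ] (M : Matrix ι κ ℝ) (x : EuclideanSpace ℝ κ) :
    EuclideanSpace ℝ ι :=
  WithLp.toLp 2 (fun i => ∑ j, M i j * x j)
def sNorm {ι κ : Type*} [Fintype ι] [Fintype κ] [DecidableEq κ] (M : Matrix ι κ ℝ) : ℝ :=
  ‖LinearMap.toContinuousLinearMap (Matrix.toEuclideanLin M)‖
def lamMax {ι : Type*} [Fintype ι] [DecidableEq ι] (M : Matrix ι ι ℝ) : ℝ :=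
  sSup (spectrum ℝ M)
def lamMinPos {ι : Type*} [Fintype ι] [DecidableEq ι] (M : Matrix ι ι ℝ) : ℝ :=
  sInf (spectrum ℝ M ∩ Set.Ioi 0)
def condNum {ι κ : Type*} [Fintype ι] [DecidableEq ι] [Fintype κ] (M : Matrix ι κ ℝ) : ℝ :=
  Real.sqrt (lamMax (M * Mᵀ) / lamMinPos (M * Mᵀ))
def gfun (m₁ m₂ d : ℕ) (β : ℝ) (x : EuclideanSpace ℝ (Fin (3 * m₁ * m₂) × Fin d)) : ℝ :=
  β * ∑ i ∈ Mset m₁ m₂, l1norm (fun j => blkN x i j - blkN x (i + 1) j)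
def gbar (m₁ m₂ d : ℕ) (Lf β : ℝ)
    (y : EuclideanSpace ℝ (Fin (3 * m₂ - 1) × Fin d)) : ℝ :=
  β / ((3 * m₁ * m₂ : ℕ) * Lf) * l1norm y
def IsProx {E : Type*} [NormedAddCommGroup E] [InnerProductSpace ℝ E]
    (η : ℝ) (ψ : E → ℝ) (x p : E) : Prop :=
  ∀ y, ψ p + ‖p - x‖ ^ 2 / (2 * η) ≤ ψ y + ‖y - x‖ ^ 2 / (2 * η)
def subdiff {E : Type*} [NormedAddCommGroup E] [InnerProductSpace ℝ E]
    (ψ : E → ℝ) (x : E) : Set E :=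
  {v | ∀ y, ψ x + (inner ℝ v (y - x) : ℝ) ≤ ψ y}
def suppSub {d : ℕ} (z : EuclideanSpace ℝ (Fin d)) (k : ℕ) : Prop :=
  ∀ j : Fin d, z j ≠ 0 → j.val + 1 ≤ k

/-- x is an ε̂-stationary point of instance 𝒫. -/
def IsStatP (m₁ m₂ d : ℕ) (Lf ε β εh : ℝ)
    (x : EuclideanSpace ℝ (Fin (3 * m₁ * m₂) × Fin d)) : Prop :=
  ∃ γ : EuclideanSpace ℝ (MCidx m₁ m₂ × Fin d), ∃ ξ ∈ subdiff (gfun m₁ m₂ d β) x,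
    ‖gradient (f0 (3 * m₁ * m₂) Lf ε) x + mvec (Amat m₁ m₂ d Lf)ᵀ γ + ξ‖ ≤ εh ∧
    ‖mvec (Amat m₁ m₂ d Lf) x‖ ≤ εh

/-- (x, y) is an ε̂-stationary point of the splitting reformulation (SP). -/
def IsStatSP (m₁ m₂ d : ℕ) (Lf ε β εh : ℝ)
    (x : EuclideanSpace ℝ (Fin (3 * m₁ * m₂) × Fin d))
    (y : EuclideanSpace ℝ (Fin (3 * m₂ - 1) × Fin d)) : Prop :=
  ∃ z₁ : EuclideanSpace ℝ (Fin (3 * m₂ - 1) × Fin d),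
    ∃ z₂ : EuclideanSpace ℝ (MCidx m₁ m₂ × Fin d),
      Metric.infDist 0 ((· - z₁) '' subdiff (gbar m₁ m₂ d Lf β) y) ≤ εh ∧
      ‖gradient (f0 (3 * m₁ * m₂) Lf ε) x + mvec (Abar m₁ m₂ d Lf)ᵀ z₁ +
        mvec (Amat m₁ m₂ d Lf)ᵀ z₂‖ ≤ εh ∧
      ‖y - mvec (Abar m₁ m₂ d Lf) x‖ ≤ εh ∧ ‖mvec (Amat m₁ m₂ d Lf) x‖ ≤ εh

/-- The sequence X follows Algorithm Class 1 on instance 𝒫. -/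
def FollowsAC1 (m₁ m₂ d : ℕ) (Lf ε β : ℝ)
    (X : ℕ → EuclideanSpace ℝ (Fin (3 * m₁ * m₂) × Fin d)) : Prop :=
  X 0 = 0 ∧ ∀ t, 1 ≤ t → ∃ η : ℝ, 0 < η ∧
    ∃ ξ ∈ Submodule.span ℝ (⋃ s ∈ Set.Iio t,
      ({X s, gradient (f0 (3 * m₁ * m₂) Lf ε) (X s),
        mvec ((Amat m₁ m₂ d Lf)ᵀ * Amat m₁ m₂ d Lf) (X s)} :
          Set (EuclideanSpace ℝ (Fin (3 * m₁ * m₂) × Fin d)))),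
      ∃ p, IsProx η (gfun m₁ m₂ d β) ξ p ∧
        X t ∈ Submodule.span ℝ ({ξ, p} : Set (EuclideanSpace ℝ (Fin (3 * m₁ * m₂) × Fin d)))

/-- The pair of sequences (X, Y) follows Algorithm Class 2 on the splitting
reformulation (SP) of instance 𝒫. -/
def FollowsAC2 (m₁ m₂ d : ℕ) (Lf ε β : ℝ)
    (X : ℕ → EuclideanSpace ℝ (Fin (3 * m₁ * m₂) × Fin d))
    (Y : ℕ → EuclideanSpace ℝ (Fin (3 * m₂ - 1) × Fin d)) : Prop :=
  X 0 = 0 ∧ Y 0 = 0 ∧ ∀ t, 1 ≤ t →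
    (X t ∈ Submodule.span ℝ (⋃ s ∈ Set.Iio t,
      ({X s, gradient (f0 (3 * m₁ * m₂) Lf ε) (X s),
        mvec ((Amat m₁ m₂ d Lf)ᵀ * Amat m₁ m₂ d Lf) (X s),
        mvec ((Abar m₁ m₂ d Lf)ᵀ * Abar m₁ m₂ d Lf) (X s),
        mvec (Abar m₁ m₂ d Lf)ᵀ (Y s)} :
          Set (EuclideanSpace ℝ (Fin (3 * m₁ * m₂) × Fin d))))) ∧
    ∃ η : ℝ, 0 < η ∧
      ∃ ξ ∈ Submodule.span ℝ (⋃ s ∈ Set.Iio t,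
        ({Y s, mvec (Abar m₁ m₂ d Lf * (Abar m₁ m₂ d Lf)ᵀ) (Y s),
          mvec (Abar m₁ m₂ d Lf) (X s)} :
            Set (EuclideanSpace ℝ (Fin (3 * m₂ - 1) × Fin d)))),
        ∃ p, IsProx η (gbar m₁ m₂ d Lf β) ξ p ∧
          Y t ∈ Submodule.span ℝ
            ({ξ, p} : Set (EuclideanSpace ℝ (Fin (3 * m₂ - 1) × Fin d)))

lemma lip_of_deriv {f f' : ℝ → ℝ} (hf : ∀ x, HasDerivAt f (f' x) x) {C : ℝ}
    (hC : ∀ x, |f' x| ≤ C) (a b : ℝ) : |f a - f b| ≤ C * |a - b| := by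
  have := Convex.norm_image_sub_le_of_norm_hasDerivWithin_le (f := f) (f' := f') (s := Set.univ)
    (fun x _ => (hf x).hasDerivWithinAt) (fun x _ => by simpa using hC x) convex_univ
    (Set.mem_univ b) (Set.mem_univ a)
  simpa [Real.norm_eq_abs] using this

lemma psi_nonneg (u : ℝ) : 0 ≤ Psi u := by
  unfold Psi; split
  · exact le_rfl
  · have h : Real.exp (-u ^ 2) ≤ 1 := by
      rw [Real.exp_le_one_iff]; nlinarith [sq_nonneg u]
    linarith

lemma psi_le_one (u : ℝ) : Psi u ≤ 1 := by
  unfold Psi; split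
  · exact zero_le_one
  · have := Real.exp_pos (-u ^ 2); linarith

lemma phi_nonneg (v : ℝ) : 0 ≤ Phi v := by
  unfold Phi
  have h := Real.neg_pi_div_two_lt_arctan v
  linarith

lemma phi_le (v : ℝ) : Phi v ≤ 4 * π := by
  unfold Phi
  have h := Real.arctan_lt_pi_div_two v
  linarith

def PsiD (u : ℝ) : ℝ := 2 * max u 0 * Real.exp (-max u 0 ^ 2)

lemma gder (t : ℝ) : HasDerivAt (fun s : ℝ => 2 * s * Real.exp (-s ^ 2))
    ((2 - 4 * t ^ 2) * Real.exp (-t ^ 2)) t := by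
  have h1 : HasDerivAt (fun s : ℝ => -s ^ 2) (-(2 * t)) t := by
    exact (hasDerivAt_pow 2 t).neg.congr_deriv (by simp)
  have h3 : HasDerivAt (fun s : ℝ => 2 * s) 2 t := by
    simpa using (hasDerivAt_id t).const_mul 2
  have := h3.mul h1.exp
  refine this.congr_deriv ?_
  ring

lemma hasDerivAt_Psi (u : ℝ) : HasDerivAt Psi (PsiD u) u := by
  rcases lt_trichotomy u 0 with hu | hu | hu
  · have hev : Psi =ᶠ[nhds u] (fun _ => (0 : ℝ)) := by
      filter_upwards [Iio_mem_nhds hu] with x hx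
      have hx' : x ≤ 0 := le_of_lt (Set.mem_Iio.mp hx)
      simp [Psi, hx']
    have h := (hasDerivAt_const u (0 : ℝ)).congr_of_eventuallyEq hev
    have : PsiD u = 0 := by simp [PsiD, max_eq_right hu.le]
    rw [this]; exact h
  · subst hu
    have h : HasDerivAt Psi 0 0 := by
      rw [hasDerivAt_iff_isLittleO, Asymptotics.isLittleO_iff]
      intro c hc
      filter_upwards [Metric.ball_mem_nhds 0 hc] with x hx
      simp only [Metric.mem_ball, Real.dist_eq, sub_zero] at hx
      have e0 : Psi 0 = 0 := by simp [Psi]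
      by_cases hx0 : x ≤ 0
      · rw [show Psi x = 0 from by simp [Psi, hx0], e0]
        simp only [sub_zero, smul_zero, sub_self, norm_zero, Real.norm_eq_abs]
        exact mul_nonneg hc.le (abs_nonneg x)
      · push_neg at hx0
        have h1 : 1 - Real.exp (-x ^ 2) ≤ x ^ 2 := by
          nlinarith [Real.add_one_le_exp (-x ^ 2)]
        have h0 : 0 ≤ 1 - Real.exp (-x ^ 2) := by
          have : Real.exp (-x ^ 2) ≤ 1 := by
            rw [Real.exp_le_one_iff]; nlinarith [sq_nonneg x]
          linarith
        have hxx : x ^ 2 ≤ c * |x| := by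
          rw [abs_of_pos hx0] at hx ⊢
          nlinarith
        rw [e0]
        simp only [Psi, if_neg (not_le.mpr hx0), sub_zero, smul_zero, Real.norm_eq_abs]
        rw [abs_of_nonneg h0]
        simpa using h1.trans hxx
    have : PsiD 0 = 0 := by simp [PsiD]
    rw [this]; exact h
  · have hev : Psi =ᶠ[nhds u] (fun x => 1 - Real.exp (-x ^ 2)) := by
      filter_upwards [Ioi_mem_nhds hu] with x hx
      have hx' : ¬ x ≤ 0 := not_le.mpr (Set.mem_Ioi.mp hx)
      simp [Psi, hx']
    have h1 : HasDerivAt (fun x : ℝ => 1 - Real.exp (-x ^ 2)) (2 * u * Real.exp (-u ^ 2)) u := by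
      have h2 : HasDerivAt (fun s : ℝ => -s ^ 2) (-(2 * u)) u := by
        exact (hasDerivAt_pow 2 u).neg.congr_deriv (by simp)
      have := (hasDerivAt_const u (1 : ℝ)).sub h2.exp
      refine this.congr_deriv ?_
      ring
    have h := h1.congr_of_eventuallyEq hev
    have : PsiD u = 2 * u * Real.exp (-u ^ 2) := by simp [PsiD, max_eq_left hu.le]
    rw [this]; exact h

lemma psiD_nonneg (u : ℝ) : 0 ≤ PsiD u := by
  unfold PsiD
  have : (0:ℝ) ≤ max u 0 := le_max_right _ _
  positivity

lemma psiD_abs_le (u : ℝ) : |PsiD u| ≤ 1 := by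
  rw [abs_of_nonneg (psiD_nonneg u)]
  unfold PsiD
  set t := max u 0 with ht
  have h0 : (0:ℝ) ≤ t := le_max_right _ _
  have h2 : 2 * t ≤ Real.exp (t ^ 2) := by
    nlinarith [Real.add_one_le_exp (t ^ 2), sq_nonneg (t - 1)]
  have h3 : Real.exp (-t ^ 2) * Real.exp (t ^ 2) = 1 := by
    rw [← Real.exp_add]; simp
  nlinarith [mul_nonneg (sub_nonneg.mpr h2) (Real.exp_pos (-t ^ 2)).le]

lemma psi_lip (a b : ℝ) : |Psi a - Psi b| ≤ 1 * |a - b| :=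
  lip_of_deriv hasDerivAt_Psi psiD_abs_le a b

lemma g_lip (a b : ℝ) :
    |2 * a * Real.exp (-a ^ 2) - 2 * b * Real.exp (-b ^ 2)| ≤ 2 * |a - b| := by
  apply lip_of_deriv gder _ a b
  intro x
  have hE : Real.exp (-x ^ 2) * Real.exp (x ^ 2) = 1 := by
    rw [← Real.exp_add]; simp
  have hEpos := Real.exp_pos (-x ^ 2)
  have hLL : Real.exp (x ^ 2 / 2) * Real.exp (x ^ 2 / 2) = Real.exp (x ^ 2) := by
    rw [← Real.exp_add]; ring_nf
  have hL := Real.add_one_le_exp (x ^ 2 / 2)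
  have hX1 : 0 ≤ 2 * Real.exp (x ^ 2) - 2 + 4 * x ^ 2 := by
    nlinarith [Real.add_one_le_exp (x ^ 2), sq_nonneg x]
  have hX2 : 0 ≤ 2 * Real.exp (x ^ 2) + 2 - 4 * x ^ 2 := by
    nlinarith [sq_nonneg (x ^ 2 - 2), Real.exp_pos (x ^ 2 / 2)]
  rw [abs_le]
  constructor
  · nlinarith [mul_nonneg hEpos.le hX1]
  · nlinarith [mul_nonneg hEpos.le hX2]

lemma psiD_lip (a b : ℝ) : |PsiD a - PsiD b| ≤ 2 * |a - b| := by
  have h := g_lip (max a 0) (max b 0)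
  have hm : |max a 0 - max b 0| ≤ |a - b| := abs_max_sub_max_le_abs a b 0
  unfold PsiD
  nlinarith [abs_nonneg (max a 0 - max b 0)]

def PhiD (v : ℝ) : ℝ := 4 / (1 + v ^ 2)

lemma hasDerivAt_Phi (v : ℝ) : HasDerivAt Phi (PhiD v) v := by
  have h := ((Real.hasDerivAt_arctan v).const_mul 4).add_const (2 * π)
  have e : PhiD v = 4 * (1 / (1 + v ^ 2)) := by unfold PhiD; ring
  rw [e]
  exact h

lemma phiD_pos (v : ℝ) : 0 < PhiD v := by unfold PhiD; positivity

lemma phiD_le (v : ℝ) : PhiD v ≤ 4 := by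
  unfold PhiD
  rw [div_le_iff₀ (by positivity)]
  nlinarith [sq_nonneg v]

lemma phi_lip (a b : ℝ) : |Phi a - Phi b| ≤ 4 * |a - b| := by
  apply lip_of_deriv hasDerivAt_Phi _ a b
  intro x
  rw [abs_of_pos (phiD_pos x)]
  exact phiD_le x

lemma phiD_lip (a b : ℝ) : |PhiD a - PhiD b| ≤ 3 * |a - b| := by
  have ha : (0:ℝ) < 1 + a ^ 2 := by positivity
  have hb : (0:ℝ) < 1 + b ^ 2 := by positivity
  have key : PhiD a - PhiD b = 4 * (b + a) * (b - a) / ((1 + a ^ 2) * (1 + b ^ 2)) := by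
    unfold PhiD; field_simp; ring
  rw [key, abs_div, abs_of_pos (mul_pos ha hb), div_le_iff₀ (mul_pos ha hb), abs_mul]
  have h2 : |4 * (b + a)| ≤ 3 * ((1 + a ^ 2) * (1 + b ^ 2)) := by
    rw [abs_le]
    constructor <;> nlinarith [sq_nonneg (3 * a - 2), sq_nonneg (3 * b - 2),
      sq_nonneg (3 * a + 2), sq_nonneg (3 * b + 2), sq_nonneg (a * b)]
  have h3 := mul_le_mul_of_nonneg_right h2 (abs_nonneg (b - a))
  have h4 : |b - a| = |a - b| := abs_sub_comm b a
  rw [← h4]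
  nlinarith [abs_nonneg (b - a)]

lemma prod_lip1 (a a' b b' : ℝ) :
    |PsiD a * Phi b - PsiD a' * Phi b'| ≤ 8 * π * |a - a'| + 4 * |b - b'| := by
  have key : PsiD a * Phi b - PsiD a' * Phi b'
      = (PsiD a - PsiD a') * Phi b + PsiD a' * (Phi b - Phi b') := by ring
  rw [key]
  refine (abs_add_le _ _).trans ?_
  rw [abs_mul, abs_mul]
  have h1 := psiD_lip a a'
  have h2 := phi_lip b b'
  have h3 : |Phi b| ≤ 4 * π := by rw [abs_of_nonneg (phi_nonneg b)]; exact phi_le b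
  have h4 := psiD_abs_le a'
  have t1 : |PsiD a - PsiD a'| * |Phi b| ≤ (2 * |a - a'|) * (4 * π) :=
    mul_le_mul h1 h3 (abs_nonneg _) (by positivity)
  have t2 : |PsiD a'| * |Phi b - Phi b'| ≤ 1 * (4 * |b - b'|) :=
    mul_le_mul h4 h2 (abs_nonneg _) zero_le_one
  nlinarith [t1, t2]

lemma prod_lip2 (a a' b b' : ℝ) :
    |Psi a * PhiD b - Psi a' * PhiD b'| ≤ 4 * |a - a'| + 3 * |b - b'| := by
  have key : Psi a * PhiD b - Psi a' * PhiD b'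
      = (Psi a - Psi a') * PhiD b + Psi a' * (PhiD b - PhiD b') := by ring
  rw [key]
  refine (abs_add_le _ _).trans ?_
  rw [abs_mul, abs_mul]
  have h1 := psi_lip a a'
  have h2 := phiD_lip b b'
  have h3 : |PhiD b| ≤ 4 := by rw [abs_of_pos (phiD_pos b)]; exact phiD_le b
  have h4 : |Psi a'| ≤ 1 := by rw [abs_of_nonneg (psi_nonneg a')]; exact psi_le_one a'
  have t1 : |Psi a - Psi a'| * |PhiD b| ≤ (1 * |a - a'|) * 4 :=
    mul_le_mul h1 h3 (abs_nonneg _) (by positivity)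
  have t2 : |Psi a'| * |PhiD b - PhiD b'| ≤ 1 * (3 * |b - b'|) :=
    mul_le_mul h4 h2 (abs_nonneg _) zero_le_one
  nlinarith [t1, t2]

def Fx (x y : ℝ) : ℝ := -(PsiD (-x) * Phi (-y)) - PsiD x * Phi y
def Fy (x y : ℝ) : ℝ := -(Psi (-x) * PhiD (-y)) - Psi x * PhiD y

lemma abs_negsub_le {A B A' B' : ℝ} (h1 : |A - A'| ≤ C) (h2 : |B - B'| ≤ D) :
    |(-A - B) - (-A' - B')| ≤ C + D := by
  have e : (-A - B) - (-A' - B') = -((A - A') + (B - B')) := by ring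
  rw [e, abs_neg]
  exact (abs_add_le _ _).trans (by linarith)

lemma Fx_lip (x y x' y' : ℝ) :
    |Fx x y - Fx x' y'| ≤ 16 * π * |x - x'| + 8 * |y - y'| := by
  have h1 := prod_lip1 (-x) (-x') (-y) (-y')
  have h2 := prod_lip1 x x' y y'
  have e1 : |-x - -x'| = |x - x'| := by rw [neg_sub_neg, abs_sub_comm]
  have e2 : |-y - -y'| = |y - y'| := by rw [neg_sub_neg, abs_sub_comm]
  rw [e1, e2] at h1
  unfold Fx
  have := abs_negsub_le h1 h2
  linarith

lemma Fy_lip (x y x' y' : ℝ) :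
    |Fy x y - Fy x' y'| ≤ 8 * |x - x'| + 6 * |y - y'| := by
  have h1 := prod_lip2 (-x) (-x') (-y) (-y')
  have h2 := prod_lip2 x x' y y'
  have e1 : |-x - -x'| = |x - x'| := by rw [neg_sub_neg, abs_sub_comm]
  have e2 : |-y - -y'| = |y - y'| := by rw [neg_sub_neg, abs_sub_comm]
  rw [e1, e2] at h1
  unfold Fy
  have := abs_negsub_le h1 h2
  linarith

lemma c_lip (t t' : ℝ) : |(-(Psi 1) * PhiD t) - (-(Psi 1) * PhiD t')| ≤ 3 * |t - t'| := by
  have h : (-(Psi 1) * PhiD t) - (-(Psi 1) * PhiD t') = -(Psi 1 * (PhiD t - PhiD t')) := by ring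
  rw [h, abs_neg, abs_mul]
  have h1 : |Psi 1| ≤ 1 := by rw [abs_of_nonneg (psi_nonneg 1)]; exact psi_le_one 1
  have h2 := phiD_lip t t'
  nlinarith [abs_nonneg (PhiD t - PhiD t'), abs_nonneg (t - t'),
    mul_le_mul h1 h2 (abs_nonneg _) zero_le_one]

def pr (d : ℕ) (k : ℕ) : EuclideanSpace ℝ (Fin d) →L[ℝ] ℝ :=
  if h : 1 ≤ k ∧ k - 1 < d then EuclideanSpace.proj (⟨k - 1, h.2⟩ : Fin d) else 0

lemma zc_eq_pr {d : ℕ} (z : EuclideanSpace ℝ (Fin d)) (k : ℕ) : zc z k = pr d k z := by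
  unfold zc pr
  split <;> simp

lemma zc_sub_pr {d : ℕ} (z z' : EuclideanSpace ℝ (Fin d)) (k : ℕ) :
    zc z k - zc z' k = pr d k (z - z') := by
  rw [zc_eq_pr, zc_eq_pr, map_sub]

lemma hasFDerivAt_coord {d : ℕ} (k : ℕ) (z : EuclideanSpace ℝ (Fin d)) :
    HasFDerivAt (fun z : EuclideanSpace ℝ (Fin d) => zc z k) (pr d k) z := by
  have h : (fun z : EuclideanSpace ℝ (Fin d) => zc z k) = pr d k :=
    funext fun z => zc_eq_pr z k
  rw [h]
  exact (pr d k).hasFDerivAt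

lemma hasFDerivAt_phi_one {d : ℕ} (z : EuclideanSpace ℝ (Fin d)) :
    HasFDerivAt (fun z : EuclideanSpace ℝ (Fin d) => phi z 1)
      ((-(Psi 1) * PhiD (zc z 1)) • pr d 1) z := by
  have h0 : (fun z : EuclideanSpace ℝ (Fin d) => phi z 1)
      = (fun t => -(Psi 1 * Phi t)) ∘ (fun z => zc z 1) := by
    funext z; simp [phi]
  rw [h0]
  have h1 : HasDerivAt (fun t => -(Psi 1 * Phi t)) (-(Psi 1) * PhiD (zc z 1)) (zc z 1) := by
    have := ((hasDerivAt_Phi (zc z 1)).const_mul (Psi 1)).neg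
    refine this.congr_deriv ?_
    ring
  exact h1.comp_hasFDerivAt z (hasFDerivAt_coord 1 z)

lemma hasFDerivAt_phi_n {d : ℕ} (n : ℕ) (hn : n ≠ 1) (z : EuclideanSpace ℝ (Fin d)) :
    HasFDerivAt (fun z : EuclideanSpace ℝ (Fin d) => phi z n)
      (Fx (zc z (n - 1)) (zc z n) • pr d (n - 1) + Fy (zc z (n - 1)) (zc z n) • pr d n) z := by
  have hneg1 : HasFDerivAt (fun z : EuclideanSpace ℝ (Fin d) => -(zc z (n - 1)))
      (-(pr d (n - 1))) z := (hasFDerivAt_coord (n - 1) z).neg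
  have hneg2 : HasFDerivAt (fun z : EuclideanSpace ℝ (Fin d) => -(zc z n)) (-(pr d n)) z :=
    (hasFDerivAt_coord n z).neg
  have hA : HasFDerivAt (fun z : EuclideanSpace ℝ (Fin d) => Psi (-(zc z (n - 1))))
      (PsiD (-(zc z (n - 1))) • -(pr d (n - 1))) z :=
    (hasDerivAt_Psi (-(zc z (n - 1)))).comp_hasFDerivAt (h₂ := Psi) z hneg1
  have hB : HasFDerivAt (fun z : EuclideanSpace ℝ (Fin d) => Phi (-(zc z n)))
      (PhiD (-(zc z n)) • -(pr d n)) z :=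
    (hasDerivAt_Phi (-(zc z n))).comp_hasFDerivAt (h₂ := Phi) z hneg2
  have hC : HasFDerivAt (fun z : EuclideanSpace ℝ (Fin d) => Psi (zc z (n - 1)))
      (PsiD (zc z (n - 1)) • pr d (n - 1)) z :=
    (hasDerivAt_Psi (zc z (n - 1))).comp_hasFDerivAt (h₂ := Psi) z (hasFDerivAt_coord (n - 1) z)
  have hD : HasFDerivAt (fun z : EuclideanSpace ℝ (Fin d) => Phi (zc z n))
      (PhiD (zc z n) • pr d n) z :=
    (hasDerivAt_Phi (zc z n)).comp_hasFDerivAt (h₂ := Phi) z (hasFDerivAt_coord n z)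
  have hmain := (hA.mul hB).sub (hC.mul hD)
  have heq : (fun z : EuclideanSpace ℝ (Fin d) => phi z n)
      = fun z : EuclideanSpace ℝ (Fin d) =>
          Psi (-(zc z (n - 1))) * Phi (-(zc z n)) - Psi (zc z (n - 1)) * Phi (zc z n) := by
    funext z; simp [phi, hn]
  rw [heq]
  refine hmain.congr_fderiv ?_
  ext w
  simp only [ContinuousLinearMap.add_apply, ContinuousLinearMap.sub_apply,
    ContinuousLinearMap.smul_apply, ContinuousLinearMap.neg_apply, smul_eq_mul, Fx, Fy]
  ring

def Dsum (d t : ℕ) (z : EuclideanSpace ℝ (Fin d)) : EuclideanSpace ℝ (Fin d) →L[ℝ] ℝ :=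
  (-(Psi 1) * PhiD (zc z 1)) • pr d 1 +
    (3 : ℝ) • ∑ j ∈ Finset.Icc 1 (d / 2),
      (Fx (zc z (2 * j + t - 1)) (zc z (2 * j + t)) • pr d (2 * j + t - 1) +
        Fy (zc z (2 * j + t - 1)) (zc z (2 * j + t)) • pr d (2 * j + t))

lemma hasFDerivAt_hsum {d : ℕ} (t : ℕ) (z : EuclideanSpace ℝ (Fin d)) :
    HasFDerivAt
      (fun z : EuclideanSpace ℝ (Fin d) =>
        phi z 1 + 3 * ∑ j ∈ Finset.Icc 1 (d / 2), phi z (2 * j + t))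
      (Dsum d t z) z := by
  refine (hasFDerivAt_phi_one z).add ?_
  have hs : HasFDerivAt
      (fun z : EuclideanSpace ℝ (Fin d) => ∑ j ∈ Finset.Icc 1 (d / 2), phi z (2 * j + t))
      (∑ j ∈ Finset.Icc 1 (d / 2),
        (Fx (zc z (2 * j + t - 1)) (zc z (2 * j + t)) • pr d (2 * j + t - 1) +
          Fy (zc z (2 * j + t - 1)) (zc z (2 * j + t)) • pr d (2 * j + t))) z := by
    apply HasFDerivAt.fun_sum
    intro j hj
    rw [Finset.mem_Icc] at hj
    exact hasFDerivAt_phi_n (2 * j + t) (by omega) z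
  exact hs.const_mul 3

lemma sum_sq_pr_le {d : ℕ} (hd : 0 < d) (s : Finset ℕ) (k : ℕ → ℕ)
    (hk : ∀ i ∈ s, ∀ j ∈ s, k i = k j → i = j) (u : EuclideanSpace ℝ (Fin d)) :
    ∑ j ∈ s, (pr d (k j) u) ^ 2 ≤ ‖u‖ ^ 2 := by
  classical
  have hnorm : ‖u‖ ^ 2 = ∑ i : Fin d, (u i) ^ 2 := by
    rw [EuclideanSpace.norm_eq, Real.sq_sqrt (by positivity)]
    simp [sq_abs]
  rw [hnorm]
  have hmod : ∀ j : ℕ, (k j - 1) % d < d := fun j => Nat.mod_lt _ hd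
  set e : ℕ → Fin d := fun j => ⟨(k j - 1) % d, hmod j⟩ with he
  have step1 : ∑ j ∈ s, (pr d (k j) u) ^ 2
      = ∑ j ∈ s.filter (fun j => 1 ≤ k j ∧ k j - 1 < d), (u (e j)) ^ 2 := by
    rw [Finset.sum_filter]
    apply Finset.sum_congr rfl
    intro j _
    unfold pr
    by_cases h : 1 ≤ k j ∧ k j - 1 < d
    · rw [dif_pos h, if_pos h]
      have hej : e j = ⟨k j - 1, h.2⟩ := by
        rw [he]
        exact Fin.ext (by simpa using Nat.mod_eq_of_lt h.2)
      rw [hej]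
      simp
    · rw [dif_neg h, if_neg h]
      simp
  rw [step1]
  have hinj : ∀ i ∈ s.filter (fun j => 1 ≤ k j ∧ k j - 1 < d),
      ∀ j ∈ s.filter (fun j => 1 ≤ k j ∧ k j - 1 < d), e i = e j → i = j := by
    intro i hi j hj hij
    rw [Finset.mem_filter] at hi hj
    have hv := congrArg Fin.val hij
    simp only [he] at hv
    rw [Nat.mod_eq_of_lt hi.2.2, Nat.mod_eq_of_lt hj.2.2] at hv
    exact hk i hi.1 j hj.1 (by omega)
  calc ∑ j ∈ s.filter (fun j => 1 ≤ k j ∧ k j - 1 < d), (u (e j)) ^ 2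
      = ∑ i ∈ (s.filter (fun j => 1 ≤ k j ∧ k j - 1 < d)).image e, (u i) ^ 2 :=
        (Finset.sum_image (f := fun i => (u i) ^ 2) hinj).symm
    _ ≤ ∑ i : Fin d, (u i) ^ 2 :=
        Finset.sum_le_sum_of_subset_of_nonneg (Finset.subset_univ _)
          (fun _ _ _ => sq_nonneg _)

lemma cs_pr {d : ℕ} (hd : 0 < d) (s : Finset ℕ) (k l : ℕ → ℕ)
    (hk : ∀ i ∈ s, ∀ j ∈ s, k i = k j → i = j)
    (hl : ∀ i ∈ s, ∀ j ∈ s, l i = l j → i = j)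
    (u w : EuclideanSpace ℝ (Fin d)) :
    ∑ j ∈ s, |pr d (k j) u| * |pr d (l j) w| ≤ ‖u‖ * ‖w‖ := by
  have h1 := sum_sq_pr_le hd s k hk u
  have h2 := sum_sq_pr_le hd s l hl w
  have h3 := Finset.sum_mul_sq_le_sq_mul_sq s (fun j => |pr d (k j) u|) (fun j => |pr d (l j) w|)
  simp only [sq_abs] at h3
  have hS : 0 ≤ ∑ j ∈ s, |pr d (k j) u| * |pr d (l j) w| :=
    Finset.sum_nonneg fun j _ => mul_nonneg (abs_nonneg _) (abs_nonneg _)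
  have hsq : (∑ j ∈ s, |pr d (k j) u| * |pr d (l j) w|) ^ 2 ≤ (‖u‖ * ‖w‖) ^ 2 := by
    calc (∑ j ∈ s, |pr d (k j) u| * |pr d (l j) w|) ^ 2
        ≤ (∑ j ∈ s, (pr d (k j) u) ^ 2) * ∑ j ∈ s, (pr d (l j) w) ^ 2 := h3
      _ ≤ ‖u‖ ^ 2 * ‖w‖ ^ 2 := by
          apply mul_le_mul h1 h2 (Finset.sum_nonneg fun j _ => sq_nonneg _) (by positivity)
      _ = (‖u‖ * ‖w‖) ^ 2 := by ring
  have h4 := Real.sqrt_le_sqrt hsq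
  rwa [Real.sqrt_sq hS, Real.sqrt_sq (by positivity)] at h4

lemma Dsum_lip {d : ℕ} (hd : 0 < d) (t : ℕ) (z z' : EuclideanSpace ℝ (Fin d)) :
    ‖Dsum d t z - Dsum d t z'‖ ≤ (48 * π + 69) * ‖z - z'‖ := by
  have hπ := Real.pi_pos
  apply ContinuousLinearMap.opNorm_le_bound _ (by positivity)
  intro w
  have hsum : (Dsum d t z - Dsum d t z') w =
      ((-(Psi 1) * PhiD (zc z 1)) - (-(Psi 1) * PhiD (zc z' 1))) * pr d 1 w
      + 3 * ∑ j ∈ Finset.Icc 1 (d / 2),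
          ((Fx (zc z (2*j+t-1)) (zc z (2*j+t)) - Fx (zc z' (2*j+t-1)) (zc z' (2*j+t)))
              * pr d (2*j+t-1) w
           + (Fy (zc z (2*j+t-1)) (zc z (2*j+t)) - Fy (zc z' (2*j+t-1)) (zc z' (2*j+t)))
              * pr d (2*j+t) w) := by
    have hsplit : ∑ j ∈ Finset.Icc 1 (d / 2),
        ((Fx (zc z (2*j+t-1)) (zc z (2*j+t)) - Fx (zc z' (2*j+t-1)) (zc z' (2*j+t)))
            * pr d (2*j+t-1) w
         + (Fy (zc z (2*j+t-1)) (zc z (2*j+t)) - Fy (zc z' (2*j+t-1)) (zc z' (2*j+t)))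
            * pr d (2*j+t) w)
        = (∑ j ∈ Finset.Icc 1 (d / 2),
            (Fx (zc z (2*j+t-1)) (zc z (2*j+t)) * pr d (2*j+t-1) w
              + Fy (zc z (2*j+t-1)) (zc z (2*j+t)) * pr d (2*j+t) w))
          - ∑ j ∈ Finset.Icc 1 (d / 2),
            (Fx (zc z' (2*j+t-1)) (zc z' (2*j+t)) * pr d (2*j+t-1) w
              + Fy (zc z' (2*j+t-1)) (zc z' (2*j+t)) * pr d (2*j+t) w) := by
      rw [← Finset.sum_sub_distrib]
      apply Finset.sum_congr rfl
      intros; ring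
    simp only [Dsum, ContinuousLinearMap.sub_apply, ContinuousLinearMap.add_apply,
      ContinuousLinearMap.coe_smul', Pi.smul_apply, ContinuousLinearMap.coe_sum',
      Finset.sum_apply, ContinuousLinearMap.smul_apply, smul_eq_mul]
    rw [hsplit]
    ring
  set u := z - z' with hu
  have hinjx : ∀ i ∈ Finset.Icc 1 (d / 2), ∀ j ∈ Finset.Icc 1 (d / 2),
      2*i+t-1 = 2*j+t-1 → i = j := by
    intro i hi j hj h
    rw [Finset.mem_Icc] at hi hj
    omega
  have hinjy : ∀ i ∈ Finset.Icc 1 (d / 2), ∀ j ∈ Finset.Icc 1 (d / 2),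
      2*i+t = 2*j+t → i = j := by
    intro i hi j hj h
    omega
  have hS1 := cs_pr hd (Finset.Icc 1 (d / 2)) _ _ hinjx hinjx u w
  have hS2 := cs_pr hd (Finset.Icc 1 (d / 2)) _ _ hinjy hinjx u w
  have hS3 := cs_pr hd (Finset.Icc 1 (d / 2)) _ _ hinjx hinjy u w
  have hS4 := cs_pr hd (Finset.Icc 1 (d / 2)) _ _ hinjy hinjy u w
  have hB0 : |pr d 1 u| * |pr d 1 w| ≤ ‖u‖ * ‖w‖ := by
    have h1 : ∀ i ∈ ({1} : Finset ℕ), ∀ j ∈ ({1} : Finset ℕ), (1:ℕ) = 1 → i = j := by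
      intro i hi j hj _
      simp only [Finset.mem_singleton] at hi hj
      omega
    simpa using cs_pr hd {1} (fun _ => 1) (fun _ => 1) h1 h1 u w
  have hterm : ∀ j ∈ Finset.Icc 1 (d / 2),
      |(Fx (zc z (2*j+t-1)) (zc z (2*j+t)) - Fx (zc z' (2*j+t-1)) (zc z' (2*j+t)))
          * pr d (2*j+t-1) w
        + (Fy (zc z (2*j+t-1)) (zc z (2*j+t)) - Fy (zc z' (2*j+t-1)) (zc z' (2*j+t)))
          * pr d (2*j+t) w|
      ≤ 16*π*(|pr d (2*j+t-1) u| * |pr d (2*j+t-1) w|)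
        + 8*(|pr d (2*j+t) u| * |pr d (2*j+t-1) w|)
        + 8*(|pr d (2*j+t-1) u| * |pr d (2*j+t) w|)
        + 6*(|pr d (2*j+t) u| * |pr d (2*j+t) w|) := by
    intro j _
    have e1 := zc_sub_pr z z' (2*j+t-1)
    have e2 := zc_sub_pr z z' (2*j+t)
    have hfx := Fx_lip (zc z (2*j+t-1)) (zc z (2*j+t)) (zc z' (2*j+t-1)) (zc z' (2*j+t))
    have hfy := Fy_lip (zc z (2*j+t-1)) (zc z (2*j+t)) (zc z' (2*j+t-1)) (zc z' (2*j+t))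
    rw [e1, e2] at hfx hfy
    refine (abs_add_le _ _).trans ?_
    rw [abs_mul, abs_mul]
    have h1 := mul_le_mul_of_nonneg_right hfx (abs_nonneg (pr d (2*j+t-1) w))
    have h2 := mul_le_mul_of_nonneg_right hfy (abs_nonneg (pr d (2*j+t) w))
    nlinarith [h1, h2]
  have hc : |(-(Psi 1) * PhiD (zc z 1)) - (-(Psi 1) * PhiD (zc z' 1))| ≤ 3 * |pr d 1 u| := by
    have := c_lip (zc z 1) (zc z' 1)
    rwa [zc_sub_pr z z' 1] at this
  have habs : |(Dsum d t z - Dsum d t z') w|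
      ≤ 3 * |pr d 1 u| * |pr d 1 w|
        + 3 * ∑ j ∈ Finset.Icc 1 (d / 2),
          (16*π*(|pr d (2*j+t-1) u| * |pr d (2*j+t-1) w|)
            + 8*(|pr d (2*j+t) u| * |pr d (2*j+t-1) w|)
            + 8*(|pr d (2*j+t-1) u| * |pr d (2*j+t) w|)
            + 6*(|pr d (2*j+t) u| * |pr d (2*j+t) w|)) := by
    rw [hsum]
    refine (abs_add_le _ _).trans ?_
    have t1 : |((-(Psi 1) * PhiD (zc z 1)) - (-(Psi 1) * PhiD (zc z' 1))) * pr d 1 w|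
        ≤ 3 * |pr d 1 u| * |pr d 1 w| := by
      rw [abs_mul]
      have := mul_le_mul_of_nonneg_right hc (abs_nonneg (pr d 1 w))
      linarith
    have t2 : |3 * ∑ j ∈ Finset.Icc 1 (d / 2),
        ((Fx (zc z (2*j+t-1)) (zc z (2*j+t)) - Fx (zc z' (2*j+t-1)) (zc z' (2*j+t)))
            * pr d (2*j+t-1) w
          + (Fy (zc z (2*j+t-1)) (zc z (2*j+t)) - Fy (zc z' (2*j+t-1)) (zc z' (2*j+t)))
            * pr d (2*j+t) w)|
        ≤ 3 * ∑ j ∈ Finset.Icc 1 (d / 2),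
          (16*π*(|pr d (2*j+t-1) u| * |pr d (2*j+t-1) w|)
            + 8*(|pr d (2*j+t) u| * |pr d (2*j+t-1) w|)
            + 8*(|pr d (2*j+t-1) u| * |pr d (2*j+t) w|)
            + 6*(|pr d (2*j+t) u| * |pr d (2*j+t) w|)) := by
      rw [abs_mul]
      have h3 : |(3:ℝ)| = 3 := by norm_num
      rw [h3]
      have := (Finset.abs_sum_le_sum_abs _ (Finset.Icc 1 (d / 2))).trans
        (Finset.sum_le_sum hterm)
      linarith
    linarith
  have hdist : ∑ j ∈ Finset.Icc 1 (d / 2),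
      (16*π*(|pr d (2*j+t-1) u| * |pr d (2*j+t-1) w|)
        + 8*(|pr d (2*j+t) u| * |pr d (2*j+t-1) w|)
        + 8*(|pr d (2*j+t-1) u| * |pr d (2*j+t) w|)
        + 6*(|pr d (2*j+t) u| * |pr d (2*j+t) w|))
      = 16*π*(∑ j ∈ Finset.Icc 1 (d / 2), |pr d (2*j+t-1) u| * |pr d (2*j+t-1) w|)
        + 8*(∑ j ∈ Finset.Icc 1 (d / 2), |pr d (2*j+t) u| * |pr d (2*j+t-1) w|)
        + 8*(∑ j ∈ Finset.Icc 1 (d / 2), |pr d (2*j+t-1) u| * |pr d (2*j+t) w|)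
        + 6*(∑ j ∈ Finset.Icc 1 (d / 2), |pr d (2*j+t) u| * |pr d (2*j+t) w|) := by
    rw [Finset.sum_add_distrib, Finset.sum_add_distrib, Finset.sum_add_distrib,
      ← Finset.mul_sum, ← Finset.mul_sum, ← Finset.mul_sum, ← Finset.mul_sum]
  rw [hdist] at habs
  have hπS1 := mul_le_mul_of_nonneg_left hS1 (by positivity : (0:ℝ) ≤ 16 * π)
  rw [Real.norm_eq_abs]
  nlinarith [habs, hS2, hS3, hS4, hB0, hπS1]

lemma zc_zero {d : ℕ} (k : ℕ) : zc (0 : EuclideanSpace ℝ (Fin d)) k = 0 := by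
  unfold zc; split <;> simp

lemma phi_zero_n {d : ℕ} (n : ℕ) (hn : n ≠ 1) : phi (0 : EuclideanSpace ℝ (Fin d)) n = 0 := by
  simp [phi, hn, zc_zero]

lemma phi_zero_one_le {d : ℕ} : phi (0 : EuclideanSpace ℝ (Fin d)) 1 ≤ 0 := by
  have e : phi (0 : EuclideanSpace ℝ (Fin d)) 1
      = -(Psi 1 * Phi (zc (0 : EuclideanSpace ℝ (Fin d)) 1)) := if_pos rfl
  rw [e]
  have := mul_nonneg (psi_nonneg 1) (phi_nonneg (zc (0 : EuclideanSpace ℝ (Fin d)) 1))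
  linarith

lemma phi_ge {d : ℕ} (z : EuclideanSpace ℝ (Fin d)) (n : ℕ) : -(4 * π) ≤ phi z n := by
  unfold phi; split
  · have h1 : Psi 1 * Phi (zc z 1) ≤ 1 * (4 * π) :=
      mul_le_mul (psi_le_one 1) (phi_le _) (phi_nonneg _) zero_le_one
    linarith
  · have h2 : Psi (zc z (n - 1)) * Phi (zc z n) ≤ 1 * (4 * π) :=
      mul_le_mul (psi_le_one _) (phi_le _) (phi_nonneg _) zero_le_one
    have h3 : 0 ≤ Psi (-zc z (n - 1)) * Phi (-zc z n) :=
      mul_nonneg (psi_nonneg _) (phi_nonneg _)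
    linarith

lemma sum_phi_ge {d : ℕ} (z : EuclideanSpace ℝ (Fin d)) (t : ℕ) :
    ((d / 2 : ℕ) : ℝ) * (-(4 * π)) ≤ ∑ j ∈ Finset.Icc 1 (d / 2), phi z (2 * j + t) := by
  have h := Finset.card_nsmul_le_sum (Finset.Icc 1 (d / 2))
    (fun j => phi z (2 * j + t)) (-(4 * π)) (fun j _ => phi_ge z _)
  simpa [Nat.card_Icc, nsmul_eq_mul] using h

lemma Dmid_lip {d : ℕ} (hd : 0 < d) (z z' : EuclideanSpace ℝ (Fin d)) :
    ‖((-(Psi 1) * PhiD (zc z 1)) • pr d 1) - ((-(Psi 1) * PhiD (zc z' 1)) • pr d 1)‖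
      ≤ 3 * ‖z - z'‖ := by
  apply ContinuousLinearMap.opNorm_le_bound _ (by positivity)
  intro w
  have expand : (((-(Psi 1) * PhiD (zc z 1)) • pr d 1)
      - ((-(Psi 1) * PhiD (zc z' 1)) • pr d 1)) w
      = ((-(Psi 1) * PhiD (zc z 1)) - (-(Psi 1) * PhiD (zc z' 1))) * pr d 1 w := by
    simp only [ContinuousLinearMap.sub_apply, ContinuousLinearMap.smul_apply, smul_eq_mul]
    ring
  rw [Real.norm_eq_abs, expand, abs_mul]
  have hB0 : |pr d 1 (z - z')| * |pr d 1 w| ≤ ‖z - z'‖ * ‖w‖ := by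
    have h1 : ∀ i ∈ ({1} : Finset ℕ), ∀ j ∈ ({1} : Finset ℕ), (1 : ℕ) = 1 → i = j := by
      intro i hi j hj _
      simp only [Finset.mem_singleton] at hi hj
      omega
    simpa using cs_pr hd {1} (fun _ => 1) (fun _ => 1) h1 h1 (z - z') w
  have hc := c_lip (zc z 1) (zc z' 1)
  rw [zc_sub_pr z z' 1] at hc
  have := mul_le_mul_of_nonneg_right hc (abs_nonneg (pr d 1 w))
  nlinarith [abs_nonneg (pr d 1 (z - z')), abs_nonneg (pr d 1 w)]


/-- For i = 1,…,m: h_i(0) − inf h_i ≤ 10π·d̄ and ∇h_i is 75π-Lipschitz. -/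
theorem stmt_1 (m₁ m₂ : ℕ) (hm₁ : 2 ≤ m₁) (hm₂ : 1 ≤ m₂) (heven : Even (m₁ * m₂))
    (d : ℕ) (hd : 5 ≤ d) (hodd : Odd d)
    (i : ℕ) (hi1 : 1 ≤ i) (him : i ≤ 3 * m₁ * m₂) :
    hfun (3 * m₁ * m₂) i (0 : EuclideanSpace ℝ (Fin d)) -
        (⨅ z : EuclideanSpace ℝ (Fin d), hfun (3 * m₁ * m₂) i z) ≤ 10 * π * d ∧
    ∀ z z' : EuclideanSpace ℝ (Fin d),
      ‖gradient (hfun (3 * m₁ * m₂) i) z - gradient (hfun (3 * m₁ * m₂) i) z'‖ ≤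
        75 * π * ‖z - z'‖ := by
  have hπ := Real.pi_pos
  have hd0 : 0 < d := by omega
  constructor
  · have h0 : hfun (3 * m₁ * m₂) i (0 : EuclideanSpace ℝ (Fin d)) ≤ 0 := by
      have hz1 := phi_zero_one_le (d := d)
      unfold hfun
      split_ifs with h1 h2
      · have hs : ∑ j ∈ Finset.Icc 1 (d / 2), phi (0 : EuclideanSpace ℝ (Fin d)) (2 * j) = 0 :=
          Finset.sum_eq_zero fun j hj => phi_zero_n _ (by
            rw [Finset.mem_Icc] at hj; omega)
        rw [hs]; linarith
      · exact hz1
      · have hs : ∑ j ∈ Finset.Icc 1 (d / 2), phi (0 : EuclideanSpace ℝ (Fin d)) (2 * j + 1) = 0 :=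
          Finset.sum_eq_zero fun j hj => phi_zero_n _ (by
            rw [Finset.mem_Icc] at hj; omega)
        rw [hs]; linarith
    have hcast : ((d / 2 : ℕ) : ℝ) * 2 ≤ (d : ℝ) := by
      exact_mod_cast Nat.div_mul_le_self d 2
    have hd1 : (1 : ℝ) ≤ (d : ℝ) := by exact_mod_cast (by omega : 1 ≤ d)
    have k1 : 6 * π * (((d / 2 : ℕ) : ℝ) * 2) ≤ 6 * π * (d : ℝ) :=
      mul_le_mul_of_nonneg_left hcast (by positivity)
    have k2 : 4 * π * 1 ≤ 4 * π * (d : ℝ) :=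
      mul_le_mul_of_nonneg_left hd1 (by positivity)
    have hπd : (0 : ℝ) ≤ π * d := by positivity
    have hlow : ∀ z : EuclideanSpace ℝ (Fin d), -(10 * π * d) ≤ hfun (3 * m₁ * m₂) i z := by
      intro z
      have hp1 := phi_ge z 1
      unfold hfun
      split_ifs with h1 h2
      · have hs := sum_phi_ge z 0
        simp only [Nat.add_zero] at hs
        nlinarith [hs]
      · linarith
      · have hs := sum_phi_ge z 1
        nlinarith [hs]
    have hinf : -(10 * π * (d : ℝ)) ≤ ⨅ z : EuclideanSpace ℝ (Fin d), hfun (3 * m₁ * m₂) i z :=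
      le_ciInf hlow
    linarith
  · intro z z'
    have key : ‖gradient (hfun (3 * m₁ * m₂) i) z - gradient (hfun (3 * m₁ * m₂) i) z'‖
        = ‖fderiv ℝ (hfun (3 * m₁ * m₂) i) z - fderiv ℝ (hfun (3 * m₁ * m₂) i) z'‖ := by
      rw [gradient, gradient, ← map_sub, LinearIsometryEquiv.norm_map]
    rw [key]
    have hle : (48 * π + 69 : ℝ) ≤ 75 * π := by nlinarith [Real.pi_gt_three]
    have hn : 0 ≤ ‖z - z'‖ := norm_nonneg _
    by_cases h1 : i ≤ 3 * m₁ * m₂ / 3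
    · have hfeq : (hfun (3 * m₁ * m₂) i : EuclideanSpace ℝ (Fin d) → ℝ)
          = fun z => phi z 1 + 3 * ∑ j ∈ Finset.Icc 1 (d / 2), phi z (2 * j + 0) := by
        funext x; simp [hfun, h1]
      rw [hfeq, (hasFDerivAt_hsum 0 z).fderiv, (hasFDerivAt_hsum 0 z').fderiv]
      have := Dsum_lip hd0 0 z z'
      nlinarith
    by_cases h2 : i ≤ 2 * (3 * m₁ * m₂) / 3
    · have hfeq : (hfun (3 * m₁ * m₂) i : EuclideanSpace ℝ (Fin d) → ℝ)
          = fun z => phi z 1 := by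
        funext x; simp [hfun, h1, h2]
      rw [hfeq, (hasFDerivAt_phi_one z).fderiv, (hasFDerivAt_phi_one z').fderiv]
      have := Dmid_lip hd0 z z'
      nlinarith
    · have hfeq : (hfun (3 * m₁ * m₂) i : EuclideanSpace ℝ (Fin d) → ℝ)
          = fun z => phi z 1 + 3 * ∑ j ∈ Finset.Icc 1 (d / 2), phi z (2 * j + 1) := by
        funext x; simp [hfun, h1, h2]
      rw [hfeq, (hasFDerivAt_hsum 1 z).fderiv, (hasFDerivAt_hsum 1 z').fderiv]
      have := Dsum_lip hd0 1 z z'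
      nlinarith


end
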